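/- Let Σ be a compact Riemannian manifold of dimension n-1, where n ≥ 3, with metric h, and let φ > 0 be a smooth function satisfying -Δφ + Qφ = λ₁φ with Q = (1/2)S - P, where S is the scalar curvature of Σ, P ≥ 0 is smooth, and λ₁ ≥ 0. Then the scalar curvature S̃ of the conformally rescaled metric h̃ = φ^{2/(n-2)} h satisfies S̃ = φ^{-2/(n-2)} (2λ₁ + 2P + ((n-1)/(n-2)) |∇φ|²/φ²) ≥ 0. -/
import Mathlib


/-- Abstract analytic data on a compact (closed) Riemannian manifold (Σ, h) of
dimension `n - 1`: the Laplace–Beltrami operator `lap`, the squared gradient norm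
`gradsq φ = |∇φ|²`, and the scalar curvature `S` of `h`. -/
structure ClosedManifoldConf where
  M : Type
  nonempty : Nonempty M
  lap : (M → ℝ) → M → ℝ
  gradsq : (M → ℝ) → M → ℝ
  gradsq_nonneg : ∀ φ p, 0 ≤ gradsq φ p
  S : M → ℝ

/-- if `φ > 0` satisfies `-Δφ + Qφ = λ₁ φ` with `Q = S/2 - P`, `P ≥ 0`
and `λ₁ ≥ 0`, then the scalar curvature `S̃` of the conformally rescaled metric
`h̃ = φ^{2/(n-2)} h`, given by
`S̃ = φ^{-n/(n-2)} (-2Δφ + Sφ + ((n-1)/(n-2)) |∇φ|²/φ)`, satisfies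
`S̃ = φ^{-2/(n-2)} (2λ₁ + 2P + ((n-1)/(n-2)) |∇φ|²/φ²) ≥ 0`. -/
theorem stmt3 (C : ClosedManifoldConf) (n : ℕ) (hn : 3 ≤ n)
    (P φ : C.M → ℝ) (lam : ℝ)
    (hφ : ∀ p, 0 < φ p) (hP : ∀ p, 0 ≤ P p) (hlam : 0 ≤ lam)
    (heig : ∀ p, -C.lap φ p + (C.S p / 2 - P p) * φ p = lam * φ p)
    (Stilde : C.M → ℝ)
    (hStilde : ∀ p, Stilde p =
      (φ p) ^ (-(n : ℝ) / ((n : ℝ) - 2)) *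
        (-2 * C.lap φ p + C.S p * φ p +
          (((n : ℝ) - 1) / ((n : ℝ) - 2)) * C.gradsq φ p / φ p)) :
    (∀ p, Stilde p =
      (φ p) ^ (-(2 : ℝ) / ((n : ℝ) - 2)) *
        (2 * lam + 2 * P p +
          (((n : ℝ) - 1) / ((n : ℝ) - 2)) * C.gradsq φ p / (φ p) ^ 2)) ∧
    ∀ p, 0 ≤ Stilde p := by
  have hn2 : (n : ℝ) - 2 ≠ 0 := by
    have : (3 : ℝ) ≤ (n : ℝ) := by exact_mod_cast hn
    linarith
  have key : ∀ p, Stilde p =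
      (φ p) ^ (-(2 : ℝ) / ((n : ℝ) - 2)) *
        (2 * lam + 2 * P p +
          (((n : ℝ) - 1) / ((n : ℝ) - 2)) * C.gradsq φ p / (φ p) ^ 2) := by
    intro p
    have hφp := hφ p
    have hlap : C.lap φ p = (C.S p / 2 - P p - lam) * φ p := by
      have := heig p; ring_nf at this ⊢; linarith
    have hexp : (φ p) ^ (-(n : ℝ) / ((n : ℝ) - 2)) =
        (φ p) ^ (-(2 : ℝ) / ((n : ℝ) - 2)) / φ p := by
      rw [eq_div_iff hφp.ne', ← Real.rpow_add_one hφp.ne']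
      congr 1
      field_simp
      ring
    rw [hStilde p, hlap, hexp]
    field_simp
    ring
  refine ⟨key, fun p => ?_⟩
  rw [key p]
  have hφp := hφ p
  apply mul_nonneg (Real.rpow_nonneg hφp.le _)
  have h1 : 0 ≤ (((n : ℝ) - 1) / ((n : ℝ) - 2)) * C.gradsq φ p / (φ p) ^ 2 := by
    apply div_nonneg _ (sq_nonneg _)
    apply mul_nonneg _ (C.gradsq_nonneg φ p)
    apply div_nonneg <;> [skip; skip] <;>
      · have : (3 : ℝ) ≤ (n : ℝ) := by exact_mod_cast hn
        linarith
  have := hP p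
  linarith
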